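/- arXiv:1703.02687 — 3 statements merged into one kernel-verified Lean document; each statement's English description precedes it below -/
import Mathlib

section
/- Let λ_i, λ_j > 0 and set λ = max( sinh(λ_i/2)·sinh(λ_j/2), (cosh(λ_i/2)·cosh(λ_j/2) + 1) / (sinh(λ_i/2)·sinh(λ_j/2)) ). If real numbers g, a > 0 satisfy cosh g = (cosh(λ_i/2)·cosh(λ_j/2) + cosh(a/2)) / (sinh(λ_i/2)·sinh(λ_j/2)), then e^{a/2}/(2λ) ≤ cosh g ≤ λ · e^{a/2}. -/
theorem cosh_arc_estimate (lami lamj g a : ℝ) (hi : 0 < lami) (hj : 0 < lamj)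
    (hg : 0 < g) (ha : 0 < a)
    (lam : ℝ)
    (hlam : lam = max (Real.sinh (lami / 2) * Real.sinh (lamj / 2))
      ((Real.cosh (lami / 2) * Real.cosh (lamj / 2) + 1) /
        (Real.sinh (lami / 2) * Real.sinh (lamj / 2))))
    (hhex : Real.cosh g =
      (Real.cosh (lami / 2) * Real.cosh (lamj / 2) + Real.cosh (a / 2)) /
        (Real.sinh (lami / 2) * Real.sinh (lamj / 2))) :
    Real.exp (a / 2) / (2 * lam) ≤ Real.cosh g ∧
      Real.cosh g ≤ lam * Real.exp (a / 2) := by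
  set si := Real.sinh (lami / 2) * Real.sinh (lamj / 2) with hsi
  set c := Real.cosh (lami / 2) * Real.cosh (lamj / 2) with hc
  have hs : 0 < si := by
    apply mul_pos <;> apply Real.sinh_pos_iff.mpr <;> positivity
  have hc1 : 1 ≤ c := by
    have h1 := Real.one_le_cosh (lami / 2)
    have h2 := Real.one_le_cosh (lamj / 2)
    nlinarith
  have hlam1 : si ≤ lam := by rw [hlam]; exact le_max_left _ _
  have hlam2 : (c + 1) / si ≤ lam := by rw [hlam]; exact le_max_right _ _
  have hlam2' : c + 1 ≤ lam * si := by
    have := (div_le_iff₀ hs).mp hlam2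
    linarith
  have hlam0 : 0 < lam := lt_of_lt_of_le hs hlam1
  have he : 0 < Real.exp (a / 2) := Real.exp_pos _
  have hch1 : 1 ≤ Real.cosh (a / 2) := Real.one_le_cosh _
  have hca : Real.cosh (a / 2) ≤ Real.exp (a / 2) := by
    rw [Real.cosh_eq]
    have : Real.exp (-(a / 2)) ≤ Real.exp (a / 2) :=
      Real.exp_le_exp.mpr (by linarith)
    linarith
  have hcl : Real.exp (a / 2) / 2 ≤ Real.cosh (a / 2) := by
    rw [Real.cosh_eq]
    have := (Real.exp_pos (-(a / 2))).le
    linarith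
  constructor
  · rw [hhex, div_le_div_iff₀ (by linarith) hs]
    nlinarith [mul_le_mul_of_nonneg_left hlam1 (by linarith : (0:ℝ) ≤ 2 * Real.cosh (a / 2))]
  · rw [hhex, div_le_iff₀ hs]
    nlinarith [mul_le_mul_of_nonneg_right hlam2' he.le]
end

section
/- Let λ_i, λ_j > 0 and λ = max( sinh(λ_i/2)·sinh(λ_j/2), (cosh(λ_i/2)·cosh(λ_j/2) + 1)/(sinh(λ_i/2)·sinh(λ_j/2)) ). If g, a > 0 satisfy cosh g = (cosh(λ_i/2)·cosh(λ_j/2) + cosh(a/2)) / (sinh(λ_i/2)·sinh(λ_j/2)), then |a − 2g| ≤ 2·log(2λ). -/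
theorem arc_curve_additive_comparison (lami lamj g a : ℝ) (hi : 0 < lami) (hj : 0 < lamj)
    (hg : 0 < g) (ha : 0 < a)
    (lam : ℝ)
    (hlam : lam = max (Real.sinh (lami / 2) * Real.sinh (lamj / 2))
      ((Real.cosh (lami / 2) * Real.cosh (lamj / 2) + 1) /
        (Real.sinh (lami / 2) * Real.sinh (lamj / 2))))
    (hhex : Real.cosh g =
      (Real.cosh (lami / 2) * Real.cosh (lamj / 2) + Real.cosh (a / 2)) /
        (Real.sinh (lami / 2) * Real.sinh (lamj / 2))) :
    |a - 2 * g| ≤ 2 * Real.log (2 * lam) := by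
  set si := Real.sinh (lami / 2) * Real.sinh (lamj / 2) with hsi
  set ci := Real.cosh (lami / 2) * Real.cosh (lamj / 2) with hci
  have hs : 0 < si := mul_pos (Real.sinh_pos_iff.2 (by linarith)) (Real.sinh_pos_iff.2 (by linarith))
  have hc1 : 1 ≤ ci := by
    have := Real.one_le_cosh (lami / 2)
    have := Real.one_le_cosh (lamj / 2)
    nlinarith
  have hlam1 : si ≤ lam := hlam ▸ le_max_left _ _
  have hlam2 : (ci + 1) / si ≤ lam := hlam ▸ le_max_right _ _
  have hlampos : 0 < lam := lt_of_lt_of_le hs hlam1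
  -- exp x ≤ 2 cosh x
  have exp_le : ∀ x : ℝ, Real.exp x ≤ 2 * Real.cosh x := by
    intro x
    rw [Real.cosh_eq]
    have := Real.exp_pos (-x)
    linarith
  -- cosh x ≤ exp x for x ≥ 0
  have cosh_le : ∀ x : ℝ, 0 ≤ x → Real.cosh x ≤ Real.exp x := by
    intro x hx
    rw [Real.cosh_eq]
    have : Real.exp (-x) ≤ Real.exp x := Real.exp_le_exp.2 (by linarith)
    linarith
  have hca : 1 ≤ Real.cosh (a / 2) := Real.one_le_cosh _
  have hcg : 1 ≤ Real.cosh g := Real.one_le_cosh _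
  -- from hhex: s * cosh g = c + cosh (a/2)
  have hex' : si * Real.cosh g = ci + Real.cosh (a / 2) := by
    field_simp at hhex
    linarith
  -- key1 : cosh (a/2) ≤ lam * exp g
  have key1 : Real.cosh (a / 2) ≤ lam * Real.exp g := by
    have h1 : Real.cosh (a / 2) ≤ si * Real.cosh g := by nlinarith
    have h2 : si * Real.cosh g ≤ lam * Real.cosh g := by nlinarith
    have h3 : lam * Real.cosh g ≤ lam * Real.exp g := by
      have := cosh_le g hg.le
      nlinarith
    linarith
  -- key2 : cosh g ≤ lam * exp (a/2)
  have key2 : Real.cosh g ≤ lam * Real.exp (a / 2) := by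
    have h1 : si * Real.cosh g ≤ (ci + 1) * Real.cosh (a / 2) := by nlinarith
    have h2 : Real.cosh g ≤ ((ci + 1) / si) * Real.cosh (a / 2) := by
      rw [div_mul_eq_mul_div, le_div_iff₀ hs]
      nlinarith
    have h3 : ((ci + 1) / si) * Real.cosh (a / 2) ≤ lam * Real.cosh (a / 2) := by
      have h := (ci + 1) / si
      nlinarith
    have h4 : lam * Real.cosh (a / 2) ≤ lam * Real.exp (a / 2) := by
      have := cosh_le (a / 2) (by linarith)
      nlinarith
    linarith
  -- deduce a/2 - g ≤ log (2 lam)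
  have hexpg : Real.exp (a / 2) ≤ Real.exp (Real.log (2 * lam) + g) := by
    rw [Real.exp_add, Real.exp_log (by linarith)]
    calc Real.exp (a / 2) ≤ 2 * Real.cosh (a / 2) := exp_le _
      _ ≤ 2 * (lam * Real.exp g) := by linarith
      _ = 2 * lam * Real.exp g := by ring
  have hexpa : Real.exp g ≤ Real.exp (Real.log (2 * lam) + a / 2) := by
    rw [Real.exp_add, Real.exp_log (by linarith)]
    calc Real.exp g ≤ 2 * Real.cosh g := exp_le _
      _ ≤ 2 * (lam * Real.exp (a / 2)) := by linarith
      _ = 2 * lam * Real.exp (a / 2) := by ring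
  have h5 : a / 2 ≤ Real.log (2 * lam) + g := Real.exp_le_exp.1 hexpg
  have h6 : g ≤ Real.log (2 * lam) + a / 2 := Real.exp_le_exp.1 hexpa
  rw [abs_le]
  constructor <;> linarith
end

section
/- Let λ_i > 0 and a, d, g > 0 satisfy cosh²(g/2) = [cosh(d/2) + cosh(a/2 + λ_i/2)]·[cosh(d/2) + cosh(a/2 − λ_i/2)] / sinh²(λ_i/2). Then e^{−λ_i/2}/sinh(λ_i/2) ≤ cosh(g/2) / (cosh(d/2) + cosh(a/2)) ≤ e^{λ_i/2}/sinh(λ_i/2). -/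
theorem self_arc_estimate (lami a d g : ℝ) (hi : 0 < lami) (ha : 0 < a) (hd : 0 < d)
    (hg : 0 < g)
    (hhex : (Real.cosh (g / 2)) ^ 2 =
      (Real.cosh (d / 2) + Real.cosh (a / 2 + lami / 2)) *
        (Real.cosh (d / 2) + Real.cosh (a / 2 - lami / 2)) /
          (Real.sinh (lami / 2)) ^ 2) :
    Real.exp (-(lami / 2)) / Real.sinh (lami / 2) ≤
        Real.cosh (g / 2) / (Real.cosh (d / 2) + Real.cosh (a / 2)) ∧
      Real.cosh (g / 2) / (Real.cosh (d / 2) + Real.cosh (a / 2)) ≤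
        Real.exp (lami / 2) / Real.sinh (lami / 2) := by
  set t := lami / 2 with ht
  set x := a / 2 with hx
  have hs : 0 < Real.sinh t := Real.sinh_pos_iff.2 (by positivity)
  have hct : 0 < Real.cosh t := Real.cosh_pos t
  have hcx : 0 < Real.cosh x := Real.cosh_pos x
  have hcd : 0 < Real.cosh (d / 2) := Real.cosh_pos _
  have hcg : 0 < Real.cosh (g / 2) := Real.cosh_pos _
  have hC : 0 < Real.cosh (d / 2) + Real.cosh x := by positivity
  have hsx : Real.sinh x ≤ Real.cosh x := by
    nlinarith [Real.cosh_sub_sinh x, Real.exp_pos (-x)]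
  have hsx' : -Real.cosh x ≤ Real.sinh x := by
    nlinarith [Real.cosh_add_sinh x, Real.exp_pos x]
  have het : Real.exp t = Real.cosh t + Real.sinh t := (Real.cosh_add_sinh t).symm
  have hemt : Real.exp (-t) = Real.cosh t - Real.sinh t := (Real.cosh_sub_sinh t).symm
  have hcp : Real.cosh (x + t) = Real.cosh x * Real.cosh t + Real.sinh x * Real.sinh t :=
    Real.cosh_add x t
  have hcm : Real.cosh (x - t) = Real.cosh x * Real.cosh t - Real.sinh x * Real.sinh t :=
    Real.cosh_sub x t
  have het1 : 1 ≤ Real.exp t := Real.one_le_exp (by positivity)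
  have hemt1 : Real.exp (-t) ≤ 1 := Real.exp_le_one_iff.2 (by simp; positivity)
  have hc1 : 1 ≤ Real.cosh t := Real.one_le_cosh t
  -- factor bounds
  have f1u : Real.cosh (d / 2) + Real.cosh (x + t) ≤
      Real.exp t * (Real.cosh (d / 2) + Real.cosh x) := by
    rw [hcp, het]; nlinarith
  have f2u : Real.cosh (d / 2) + Real.cosh (x - t) ≤
      Real.exp t * (Real.cosh (d / 2) + Real.cosh x) := by
    rw [hcm, het]; nlinarith
  have f1l : Real.exp (-t) * (Real.cosh (d / 2) + Real.cosh x) ≤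
      Real.cosh (d / 2) + Real.cosh (x + t) := by
    rw [hcp, hemt]; nlinarith
  have f2l : Real.exp (-t) * (Real.cosh (d / 2) + Real.cosh x) ≤
      Real.cosh (d / 2) + Real.cosh (x - t) := by
    rw [hcm, hemt]; nlinarith
  have f1p : 0 < Real.cosh (d / 2) + Real.cosh (x + t) := by positivity
  have f2p : 0 < Real.cosh (d / 2) + Real.cosh (x - t) := by positivity
  have hep : 0 ≤ Real.exp (-t) * (Real.cosh (d / 2) + Real.cosh x) := by positivity
  have key : (Real.cosh (g / 2) * Real.sinh t) ^ 2 =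
      (Real.cosh (d / 2) + Real.cosh (x + t)) * (Real.cosh (d / 2) + Real.cosh (x - t)) := by
    rw [mul_pow, hhex]; field_simp
  constructor
  · rw [div_le_div_iff₀ hs hC]
    have hsq : (Real.exp (-t) * (Real.cosh (d / 2) + Real.cosh x)) ^ 2 ≤
        (Real.cosh (g / 2) * Real.sinh t) ^ 2 := by
      rw [key, pow_two]
      exact mul_le_mul f1l f2l hep f1p.le
    have := Real.sqrt_le_sqrt hsq
    rwa [Real.sqrt_sq hep, Real.sqrt_sq (by positivity)] at this
  · rw [div_le_div_iff₀ hC hs]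
    have hsq : (Real.cosh (g / 2) * Real.sinh t) ^ 2 ≤
        (Real.exp t * (Real.cosh (d / 2) + Real.cosh x)) ^ 2 := by
      rw [key, pow_two]
      exact mul_le_mul f1u f2u f2p.le (by positivity)
    have := Real.sqrt_le_sqrt hsq
    rwa [Real.sqrt_sq (by positivity), Real.sqrt_sq (by positivity)] at this
end
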